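/- arXiv:2309.13989 — 2 statements merged into one kernel-verified Lean document; each statement's English description precedes it below -/
import Mathlib

section
/- Let X, X', Y, Z be finite-valued random variables such that I(Y; Z | (X, X')) = 0. Then I(X; Y | Z) ≤ I(X; X' | Z) + I(X; Y | X'). -/
/-
Two chain rules for conditional mutual information give
`I(X;Y|Z) + I(X;X'|(Y,Z)) = I(X;X'|Z) + I(X;Y|(X',Z))` and
`I(X;Y|X') + I(Y;Z|(X,X')) = I(Y;Z|X') + I(X;Y|(X',Z))`.
The hypothesis kills `I(Y;Z|(X,X'))`, so the theorem follows from the nonnegativity of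
`I(X;X'|(Y,Z))` and `I(Y;Z|X')`. Both chain rules are identities between joint entropies, and
nonnegativity is Gibbs' inequality, i.e. `log t ≤ t - 1` summed against the joint law.
-/

/-
`Real.log 0 = 0` makes the terms `0 * log 0` vanish, and `condp p W w` is junk (identically zero)
when `P(W = w) = 0`, which is harmless because `cmi` weights it by `P(W = w)`.
-/
open scoped Classical
open Finset

noncomputable def pr {Ω α : Type*} [Fintype Ω] (p : Ω → ℝ) (X : Ω → α) (x : α) : ℝ :=
  ∑ ω, if X ω = x then p ω else 0

noncomputable def ent {Ω α : Type*} [Fintype Ω] [Fintype α] (p : Ω → ℝ) (X : Ω → α) : ℝ :=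
  -∑ x, pr p X x * Real.log (pr p X x)

noncomputable def mi {Ω α β : Type*} [Fintype Ω] [Fintype α] [Fintype β]
    (p : Ω → ℝ) (X : Ω → α) (Y : Ω → β) : ℝ :=
  ent p X + ent p Y - ent p (fun ω => (X ω, Y ω))

noncomputable def condp {Ω γ : Type*} [Fintype Ω] (p : Ω → ℝ) (W : Ω → γ) (w : γ) : Ω → ℝ :=
  fun ω => if W ω = w then p ω / pr p W w else 0

noncomputable def cmi {Ω α β γ : Type*} [Fintype Ω] [Fintype α] [Fintype β] [Fintype γ]
    (p : Ω → ℝ) (X : Ω → α) (Y : Ω → β) (W : Ω → γ) : ℝ :=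
  ∑ w, pr p W w * mi (condp p W w) X Y

noncomputable def klDivF {S : Type*} [Fintype S] (p q : S → ℝ) : ℝ :=
  ∑ s, p s * Real.log (p s / q s)

namespace Real

theorem mul_div_mul_log_div {a b : ℝ} (h : b = 0 → a = 0) :
    b * (a / b * log (a / b)) = a * log a - a * log b := by
  by_cases hb : b = 0
  · simp [hb, h hb]
  by_cases ha : a = 0
  · simp [ha]
  rw [log_div ha hb]
  field_simp

theorem sub_le_mul_log_sub_mul_log {a b : ℝ} (ha : 0 ≤ a) (hb : 0 ≤ b) (hab : 0 < a → 0 < b) :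
    a - b ≤ a * log a - a * log b := by
  rcases ha.eq_or_lt with rfl | ha
  · simpa using hb
  have hb' : 0 < b := hab ha
  have hlog : log (b / a) ≤ b / a - 1 := log_le_sub_one_of_pos (by positivity)
  rw [log_div hb'.ne' ha.ne'] at hlog
  have := mul_le_mul_of_nonneg_left hlog ha.le
  rw [mul_sub, mul_sub, mul_div_cancel₀ _ ha.ne'] at this
  linarith

end Real

section Distribution

variable {Ω α β : Type*} [Fintype Ω] {p : Ω → ℝ}

theorem pr_nonneg (hp : ∀ ω, 0 ≤ p ω) (X : Ω → α) (x : α) : 0 ≤ pr p X x :=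
  sum_nonneg fun ω _ => by split_ifs; exacts [hp ω, le_rfl]

theorem sum_pr [Fintype α] (p : Ω → ℝ) (X : Ω → α) : ∑ x, pr p X x = ∑ ω, p ω := by
  unfold pr
  rw [sum_comm]
  simp

theorem sum_pr_pair_eq_pr_fst [Fintype β] (p : Ω → ℝ) (X : Ω → α) (Y : Ω → β) (x : α) :
    ∑ y, pr p (fun ω => (X ω, Y ω)) (x, y) = pr p X x := by
  unfold pr
  rw [sum_comm]
  simp [Prod.ext_iff, ite_and]

theorem sum_pr_pair_eq_pr_snd [Fintype α] (p : Ω → ℝ) (X : Ω → α) (Y : Ω → β) (y : β) :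
    ∑ x, pr p (fun ω => (X ω, Y ω)) (x, y) = pr p Y y := by
  unfold pr
  rw [sum_comm]
  simp [Prod.ext_iff, ite_and]

theorem pr_pair_le_pr_fst [Fintype β] (hp : ∀ ω, 0 ≤ p ω) (X : Ω → α) (Y : Ω → β) (x : α) (y : β) :
    pr p (fun ω => (X ω, Y ω)) (x, y) ≤ pr p X x :=
  sum_pr_pair_eq_pr_fst p X Y x ▸
    single_le_sum (fun y _ => pr_nonneg hp _ (x, y)) (mem_univ y)

theorem pr_pair_le_pr_snd [Fintype α] (hp : ∀ ω, 0 ≤ p ω) (X : Ω → α) (Y : Ω → β) (x : α) (y : β) :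
    pr p (fun ω => (X ω, Y ω)) (x, y) ≤ pr p Y y :=
  sum_pr_pair_eq_pr_snd p X Y y ▸
    single_le_sum (fun x _ => pr_nonneg hp _ (x, y)) (mem_univ x)

theorem ent_comp_of_injective [Fintype α] [Fintype β] (p : Ω → ℝ) (U : Ω → α) {f : α → β}
    (hf : Function.Injective f) : ent p (fun ω => f (U ω)) = ent p U := by
  unfold ent
  congr 1
  refine (Fintype.sum_of_injective f hf _ _ (fun b hb => ?_) fun a => ?_).symm
  · have : pr p (fun ω => f (U ω)) b = 0 :=
      sum_eq_zero fun ω _ => if_neg fun h => hb ⟨U ω, h⟩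
    simp [this]
  · simp only [pr, hf.eq_iff]

end Distribution

section Conditioning

variable {Ω α β γ : Type*} [Fintype Ω] {p : Ω → ℝ}

theorem condp_nonneg (hp : ∀ ω, 0 ≤ p ω) (W : Ω → γ) (w : γ) (ω : Ω) : 0 ≤ condp p W w ω := by
  unfold condp
  split_ifs
  exacts [div_nonneg (hp ω) (pr_nonneg hp W w), le_rfl]

theorem sum_condp (W : Ω → γ) {w : γ} (hw : pr p W w ≠ 0) : ∑ ω, condp p W w ω = 1 := by
  rw [← div_self hw, pr, sum_div]
  exact sum_congr rfl fun ω _ => by unfold condp; split_ifs <;> simp [pr]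

theorem pr_condp (p : Ω → ℝ) (W : Ω → γ) (w : γ) (X : Ω → α) (x : α) :
    pr (condp p W w) X x = pr p (fun ω => (X ω, W ω)) (x, w) / pr p W w := by
  unfold pr condp
  rw [sum_div]
  refine sum_congr rfl fun ω _ => ?_
  by_cases hx : X ω = x <;> by_cases hw : W ω = w <;> simp [hx, hw, pr]

end Conditioning

section Entropy

variable {Ω α β γ : Type*} [Fintype Ω] [Fintype α] {p : Ω → ℝ}

theorem sum_pr_mul_ent_condp [Fintype γ] (hp : ∀ ω, 0 ≤ p ω) (X : Ω → α) (W : Ω → γ) :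
    ∑ w, pr p W w * ent (condp p W w) X = ent p (fun ω => (X ω, W ω)) - ent p W := by
  have hJ : ∀ w x, pr p W w = 0 → pr p (fun ω => (X ω, W ω)) (x, w) = 0 := fun w x hw =>
    le_antisymm (hw ▸ pr_pair_le_pr_snd hp X W x w) (pr_nonneg hp _ _)
  calc ∑ w, pr p W w * ent (condp p W w) X
      = ∑ w, ∑ x, (pr p (fun ω => (X ω, W ω)) (x, w) * Real.log (pr p W w) -
          pr p (fun ω => (X ω, W ω)) (x, w) * Real.log (pr p (fun ω => (X ω, W ω)) (x, w))) := by
        simp only [ent, pr_condp, mul_neg, mul_sum, Real.mul_div_mul_log_div (hJ _ _),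
          ← sum_neg_distrib, neg_sub]
    _ = ∑ w, pr p W w * Real.log (pr p W w) - ∑ w, ∑ x, pr p (fun ω => (X ω, W ω)) (x, w) *
          Real.log (pr p (fun ω => (X ω, W ω)) (x, w)) := by
        simp only [sum_sub_distrib, ← sum_mul, sum_pr_pair_eq_pr_snd]
    _ = ent p (fun ω => (X ω, W ω)) - ent p W := by
        rw [ent, ent, Fintype.sum_prod_type, sum_comm]
        ring

theorem cmi_eq_ent [Fintype β] [Fintype γ] (hp : ∀ ω, 0 ≤ p ω) (X : Ω → α) (Y : Ω → β)
    (W : Ω → γ) :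
    cmi p X Y W = ent p (fun ω => (X ω, W ω)) + ent p (fun ω => (Y ω, W ω))
      - ent p (fun ω => ((X ω, Y ω), W ω)) - ent p W := by
  simp only [cmi, mi, mul_sub, mul_add, sum_sub_distrib, sum_add_distrib, sum_pr_mul_ent_condp hp]
  ring

theorem mi_nonneg [Fintype β] (hp : ∀ ω, 0 ≤ p ω) (hsum : ∑ ω, p ω = 1) (X : Ω → α)
    (Y : Ω → β) : 0 ≤ mi p X Y := by
  set J : α → β → ℝ := fun x y => pr p (fun ω => (X ω, Y ω)) (x, y)
  have hmarg_fst : ∀ x, ∑ y, J x y = pr p X x := sum_pr_pair_eq_pr_fst p X Y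
  have hmarg_snd : ∀ y, ∑ x, J x y = pr p Y y := sum_pr_pair_eq_pr_snd p X Y
  have hpos : ∀ x y, 0 < J x y → 0 < pr p X x ∧ 0 < pr p Y y := fun x y h =>
    ⟨h.trans_le (pr_pair_le_pr_fst hp X Y x y), h.trans_le (pr_pair_le_pr_snd hp X Y x y)⟩
  have hpoint : ∀ x y, J x y - pr p X x * pr p Y y ≤
      J x y * Real.log (J x y) - J x y * Real.log (pr p X x) - J x y * Real.log (pr p Y y) := by
    intro x y
    rcases (show 0 ≤ J x y from pr_nonneg hp _ _).eq_or_lt with h0 | hJ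
    · rw [← h0]
      simpa using mul_nonneg (pr_nonneg hp X x) (pr_nonneg hp Y y)
    obtain ⟨hx, hy⟩ := hpos x y hJ
    have := Real.sub_le_mul_log_sub_mul_log hJ.le (mul_pos hx hy).le fun _ => mul_pos hx hy
    rwa [Real.log_mul hx.ne' hy.ne', mul_add, ← sub_sub] at this
  calc (0 : ℝ) = ∑ x, ∑ y, (J x y - pr p X x * pr p Y y) := by
        simp only [sum_sub_distrib, hmarg_fst, ← mul_sum, ← sum_mul, sum_pr, hsum]
        ring
    _ ≤ ∑ x, ∑ y, (J x y * Real.log (J x y) - J x y * Real.log (pr p X x)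
          - J x y * Real.log (pr p Y y)) :=
        sum_le_sum fun x _ => sum_le_sum fun y _ => hpoint x y
    _ = mi p X Y := by
        simp only [sum_sub_distrib, ← sum_mul, hmarg_fst]
        rw [sum_comm (f := fun x y => J x y * Real.log (pr p Y y))]
        simp only [← sum_mul, hmarg_snd, mi, ent, Fintype.sum_prod_type]
        ring

theorem cmi_nonneg [Fintype β] [Fintype γ] (hp : ∀ ω, 0 ≤ p ω) (X : Ω → α) (Y : Ω → β)
    (W : Ω → γ) : 0 ≤ cmi p X Y W :=
  sum_nonneg fun w _ => by
    rcases (pr_nonneg hp W w).eq_or_lt with h | h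
    · simp [← h]
    · exact mul_nonneg h.le (mi_nonneg (condp_nonneg hp W w) (sum_condp W h.ne') X Y)

end Entropy

theorem cmi_le_of_representation_general
    {Ω 𝒳 𝒳' 𝒴 𝒵 : Type*} [Fintype Ω] [Fintype 𝒳] [Fintype 𝒳'] [Fintype 𝒴] [Fintype 𝒵]
    (p : Ω → ℝ) (hp : ∀ ω, 0 ≤ p ω)
    (X : Ω → 𝒳) (X' : Ω → 𝒳') (Y : Ω → 𝒴) (Z : Ω → 𝒵)
    (h : cmi p Y Z (fun ω => (X ω, X' ω)) = 0) :
    cmi p X Y Z ≤ cmi p X X' Z + cmi p X Y X' := by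
  have hX_X'_YZ := cmi_nonneg hp X X' (fun ω => (Y ω, Z ω))
  have hY_Z_X' := cmi_nonneg hp Y Z X'
  rw [cmi_eq_ent hp] at h hX_X'_YZ hY_Z_X'
  rw [cmi_eq_ent hp, cmi_eq_ent hp, cmi_eq_ent hp]
  -- the expansions name the same joint entropies through differently nested tuples
  have hXYZ : ent p (fun ω => ((X ω, Y ω), Z ω)) = ent p (fun ω => (X ω, (Y ω, Z ω))) :=
    ent_comp_of_injective p (fun ω => (X ω, (Y ω, Z ω))) (Equiv.prodAssoc _ _ _).symm.injective
  have hYXX' : ent p (fun ω => (Y ω, (X ω, X' ω))) = ent p (fun ω => ((X ω, Y ω), X' ω)) :=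
    ent_comp_of_injective p (fun ω => ((X ω, Y ω), X' ω)) (f := fun t => (t.1.2, (t.1.1, t.2)))
      fun _ _ h => by simp_all [Prod.ext_iff]
  have hZXX' : ent p (fun ω => (Z ω, (X ω, X' ω))) = ent p (fun ω => ((X ω, X' ω), Z ω)) :=
    ent_comp_of_injective p (fun ω => ((X ω, X' ω), Z ω)) Prod.swap_injective
  have hYZXX' : ent p (fun ω => ((Y ω, Z ω), (X ω, X' ω))) =
      ent p (fun ω => ((X ω, X' ω), (Y ω, Z ω))) :=
    ent_comp_of_injective p (fun ω => ((X ω, X' ω), (Y ω, Z ω))) Prod.swap_injective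
  have hYZX' : ent p (fun ω => ((Y ω, Z ω), X' ω)) = ent p (fun ω => (X' ω, (Y ω, Z ω))) :=
    ent_comp_of_injective p (fun ω => (X' ω, (Y ω, Z ω))) Prod.swap_injective
  have hZX' : ent p (fun ω => (Z ω, X' ω)) = ent p (fun ω => (X' ω, Z ω)) :=
    ent_comp_of_injective p (fun ω => (X' ω, Z ω)) Prod.swap_injective
  linarith

/-- If `I(Y; Z | (X,X')) = 0` then
`I(X; Y | Z) ≤ I(X; X' | Z) + I(X; Y | X')`. -/
theorem cmi_le_of_representation
    {Ω 𝒳 𝒳' 𝒴 𝒵 : Type*} [Fintype Ω] [Fintype 𝒳] [Fintype 𝒳'] [Fintype 𝒴] [Fintype 𝒵]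
    [Nonempty 𝒳] [Nonempty 𝒳'] [Nonempty 𝒴] [Nonempty 𝒵]
    (p : Ω → ℝ) (hp : ∀ ω, 0 ≤ p ω) (hsum : ∑ ω, p ω = 1)
    (X : Ω → 𝒳) (X' : Ω → 𝒳') (Y : Ω → 𝒴) (Z : Ω → 𝒵)
    (h : cmi p Y Z (fun ω => (X ω, X' ω)) = 0) :
    cmi p X Y Z ≤ cmi p X X' Z + cmi p X Y X' :=
  cmi_le_of_representation_general p hp X X' Y Z h
end

section
/- Bayes error versus conditional entropy: let T and Z be finite-valued random variables, and define the Bayes error rate P_e = ∑_{z : P(Z=z)>0} P(Z=z) · (1 - max_t P(T=t | Z=z)). Then P_e ≤ 1 - exp(-H(T|Z)), where H(T|Z) = H(T,Z) - H(Z) is the conditional entropy; equivalently, -log(1 - P_e) ≤ H(T|Z). -/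
/-
Discrete probability setup: a finite sample space `Ω` with weight function `p`
(nonnegative, summing to 1).  Random variables are functions out of `Ω` into
nonempty finite sets.  `pr p X x = P(X = x)`, `ent` is Shannon entropy
(natural log, with `0 · log 0 = 0` since `Real.log 0 = 0`), `mi` is mutual
information `I(X;Y) = H(X) + H(Y) - H(X,Y)`, and `cmi` is conditional mutual
information `I(X;Y|W) = ∑ w, P(W=w) · I(X;Y | W=w)` computed with respect to
the conditional distribution `condp p W w` (terms with `P(W=w)=0` vanish).
`klDivF` is the discrete Kullback–Leibler divergence with the convention that
terms with `p s = 0` contribute `0` (indeed `0 * log 0 = 0` in Lean).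
-/

open scoped Classical
open Finset

/-- Bayes error versus conditional entropy.  With Bayes
error rate `P_e = ∑_z P(Z=z) (1 - max_t P(T=t|Z=z))` (terms with `P(Z=z) = 0`
vanish since they are multiplied by `0`), we have `P_e ≤ 1 - exp (-H(T|Z))`
where `H(T|Z) = H(T,Z) - H(Z)`; equivalently `-log (1 - P_e) ≤ H(T|Z)`. -/
theorem bayes_error_le_of_cond_entropy
    {Ω 𝒯 𝒵 : Type*} [Fintype Ω] [Fintype 𝒯] [Fintype 𝒵] [Nonempty 𝒯] [Nonempty 𝒵]
    (p : Ω → ℝ) (hp : ∀ ω, 0 ≤ p ω) (hsum : ∑ ω, p ω = 1)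
    (T : Ω → 𝒯) (Z : Ω → 𝒵)
    (Pe : ℝ)
    (hPe : Pe = ∑ z, pr p Z z *
      (1 - Finset.univ.sup' Finset.univ_nonempty
        (fun t => pr p (fun ω => (T ω, Z ω)) (t, z) / pr p Z z))) :
    Pe ≤ 1 - Real.exp (-(ent p (fun ω => (T ω, Z ω)) - ent p Z)) ∧
    -Real.log (1 - Pe) ≤ ent p (fun ω => (T ω, Z ω)) - ent p Z := by
  classical
  set J : Ω → 𝒯 × 𝒵 := fun ω => (T ω, Z ω) with hJ
  set m : 𝒵 → ℝ := fun z => Finset.univ.sup' Finset.univ_nonempty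
      (fun t => pr p J (t, z) / pr p Z z) with hm
  have hprJ : ∀ x, 0 ≤ pr p J x := by
    intro x; apply Finset.sum_nonneg; intro ω _
    split <;> simp [hp ω]
  have hprZ : ∀ z, 0 ≤ pr p Z z := by
    intro z; apply Finset.sum_nonneg; intro ω _
    split <;> simp [hp ω]
  have hmarg : ∀ z, pr p Z z = ∑ t, pr p J (t, z) := by
    intro z
    simp only [pr]
    rw [Finset.sum_comm]
    apply Finset.sum_congr rfl; intro ω _
    by_cases h : Z ω = z
    · simp [hJ, Prod.ext_iff, h, Finset.sum_ite_eq]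
    · simp [hJ, Prod.ext_iff, h]
  have hZ1 : ∑ z, pr p Z z = 1 := by
    simp only [pr]
    rw [Finset.sum_comm]
    simpa [Finset.sum_ite_eq] using hsum
  have hle : ∀ t z, pr p J (t, z) ≤ pr p Z z := by
    intro t z
    apply Finset.sum_le_sum; intro ω _
    by_cases h2 : Z ω = z
    · simp only [h2, if_pos rfl]
      split <;> simp [hp ω]
    · have hne : J ω ≠ (t, z) := by simp [hJ, Prod.ext_iff, h2]
      simp [hne, h2]
  have hzero : ∀ z, pr p Z z = 0 → ∀ t, pr p J (t, z) = 0 := fun z hz t =>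
    le_antisymm (hz ▸ hle t z) (hprJ _)
  have hmle : ∀ z t, pr p J (t, z) / pr p Z z ≤ m z := by
    intro z t
    exact Finset.le_sup' (fun t => pr p J (t, z) / pr p Z z) (Finset.mem_univ t)
  have hm0 : ∀ z, 0 ≤ m z :=
    fun z => le_trans (div_nonneg (hprJ _) (hprZ _)) (hmle z (Classical.arbitrary 𝒯))
  have hmpos : ∀ z, 0 < pr p Z z → 0 < m z := by
    intro z hz
    obtain ⟨t, ht⟩ : ∃ t, 0 < pr p J (t, z) := by
      by_contra h
      push_neg at h
      have h0 : ∑ t, pr p J (t, z) = 0 :=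
        Finset.sum_eq_zero fun t _ => le_antisymm (h t) (hprJ _)
      rw [hmarg, h0] at hz; linarith
    exact lt_of_lt_of_le (div_pos ht hz) (hmle z t)
  -- chain-rule style decomposition
  have hentJ : ent p J = -∑ z, ∑ t, pr p J (t, z) * Real.log (pr p J (t, z)) := by
    rw [ent, Fintype.sum_prod_type, Finset.sum_comm]
  have hentZ : ent p Z = -∑ z, ∑ t, pr p J (t, z) * Real.log (pr p Z z) := by
    rw [ent]
    congr 1
    apply Finset.sum_congr rfl; intro z _
    rw [← Finset.sum_mul, ← hmarg]
  -- per-z bound and summation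
  have key : ∑ z, pr p Z z * (-Real.log (m z)) ≤ ent p J - ent p Z := by
    have perz : ∀ z : 𝒵, pr p Z z * (-Real.log (m z)) ≤
        (∑ t, pr p J (t, z) * Real.log (pr p Z z))
          - ∑ t, pr p J (t, z) * Real.log (pr p J (t, z)) := by
      intro z
      by_cases hz : pr p Z z = 0
      · simp [hz, hzero z hz]
      · have hzpos : 0 < pr p Z z := lt_of_le_of_ne (hprZ z) (Ne.symm hz)
        have hmz : 0 < m z := hmpos z hzpos
        have hA : ∑ t, pr p J (t, z) * Real.log (pr p J (t, z)) ≤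
            ∑ t, pr p J (t, z) * (Real.log (pr p Z z) + Real.log (m z)) := by
          apply Finset.sum_le_sum; intro t _
          by_cases hj : pr p J (t, z) = 0
          · simp [hj]
          · have hjpos : 0 < pr p J (t, z) := lt_of_le_of_ne (hprJ _) (Ne.symm hj)
            have hub : pr p J (t, z) ≤ m z * pr p Z z := by
              have := hmle z t
              rw [div_le_iff₀ hzpos] at this
              exact this
            have : Real.log (pr p J (t, z)) ≤ Real.log (m z * pr p Z z) :=
              Real.log_le_log hjpos hub
            rw [Real.log_mul (ne_of_gt hmz) hz] at this
            have := mul_le_mul_of_nonneg_left this (le_of_lt hjpos)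
            linarith
        have hB : ∑ t, pr p J (t, z) * (Real.log (pr p Z z) + Real.log (m z))
            = pr p Z z * Real.log (pr p Z z) + pr p Z z * Real.log (m z) := by
          rw [← Finset.sum_mul, ← hmarg]; ring
        have hC : ∑ t, pr p J (t, z) * Real.log (pr p Z z)
            = pr p Z z * Real.log (pr p Z z) := by
          rw [← Finset.sum_mul, ← hmarg]
        rw [hC]
        rw [hB] at hA
        linarith
    calc ∑ z, pr p Z z * (-Real.log (m z))
        ≤ ∑ z, ((∑ t, pr p J (t, z) * Real.log (pr p Z z))
            - ∑ t, pr p J (t, z) * Real.log (pr p J (t, z))) :=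
          Finset.sum_le_sum fun z _ => perz z
      _ = ent p J - ent p Z := by
          rw [hentJ, hentZ, Finset.sum_sub_distrib]; ring
  -- Jensen
  have hjensen : ∑ z, pr p Z z * Real.log (m z) ≤ Real.log (∑ z, pr p Z z * m z) := by
    set s := Finset.univ.filter (fun z => 0 < pr p Z z) with hs
    have hnotin : ∀ z ∈ Finset.univ, z ∉ s → pr p Z z = 0 := by
      intro z _ hz
      simp only [hs, Finset.mem_filter, Finset.mem_univ, true_and] at hz
      exact le_antisymm (not_lt.mp hz) (hprZ z)
    have hw1 : ∑ z ∈ s, pr p Z z = 1 := by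
      rw [← hZ1]; symm
      apply (Finset.sum_subset (Finset.filter_subset _ _) _).symm
      intro z hz hz'
      exact hnotin z hz hz'
    have hj := strictConcaveOn_log_Ioi.concaveOn.le_map_sum
      (t := s) (w := fun z => pr p Z z) (p := m)
      (fun z _ => hprZ z) hw1
      (fun z hz => by
        simp only [hs, Finset.mem_filter, Finset.mem_univ, true_and] at hz
        exact hmpos z hz)
    simp only [smul_eq_mul] at hj
    have e1 : ∑ z ∈ s, pr p Z z * Real.log (m z) = ∑ z, pr p Z z * Real.log (m z) :=
      Finset.sum_subset (Finset.filter_subset _ _)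
        (fun z hz hz' => by rw [hnotin z hz hz']; ring)
    have e2 : ∑ z ∈ s, pr p Z z * m z = ∑ z, pr p Z z * m z :=
      Finset.sum_subset (Finset.filter_subset _ _)
        (fun z hz hz' => by rw [hnotin z hz hz']; ring)
    rw [e1, e2] at hj
    exact hj
  set S := ∑ z, pr p Z z * m z with hSdef
  have hPeS : Pe = 1 - S := by
    rw [hPe]
    have : ∀ z : 𝒵, pr p Z z *
        (1 - Finset.univ.sup' Finset.univ_nonempty
          (fun t => pr p J (t, z) / pr p Z z)) = pr p Z z - pr p Z z * m z := by
      intro z; rw [hm]; ring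
    rw [Finset.sum_congr rfl (fun z _ => this z), Finset.sum_sub_distrib, hZ1, hSdef]
  have hSpos : 0 < S := by
    obtain ⟨z0, hz0⟩ : ∃ z, 0 < pr p Z z := by
      by_contra h
      push_neg at h
      have : ∑ z, pr p Z z = 0 :=
        Finset.sum_eq_zero fun z _ => le_antisymm (h z) (hprZ z)
      rw [hZ1] at this; linarith
    apply Finset.sum_pos'
    · exact fun z _ => mul_nonneg (hprZ z) (hm0 z)
    · exact ⟨z0, Finset.mem_univ z0, mul_pos hz0 (hmpos z0 hz0)⟩
  have hneg : ∑ z, pr p Z z * (-Real.log (m z)) = -∑ z, pr p Z z * Real.log (m z) := by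
    rw [← Finset.sum_neg_distrib]
    exact Finset.sum_congr rfl fun z _ => by ring
  have hlog : -Real.log S ≤ ent p J - ent p Z := by
    rw [hneg] at key
    linarith
  constructor
  · have hexp : Real.exp (-(ent p J - ent p Z)) ≤ S := by
      calc Real.exp (-(ent p J - ent p Z)) ≤ Real.exp (Real.log S) :=
            Real.exp_le_exp.mpr (by linarith)
        _ = S := Real.exp_log hSpos
    linarith
  · have : (1 : ℝ) - Pe = S := by linarith
    rw [this]
    exact hlog
end
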